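/- The four polynomials c1⁰ = −12·I2, c2⁰ = I4 + Ĩ4/4 + 368·I2², d2⁰ = −I4/6 + Ĩ4/48 − (88/3)·I2², d3⁰ = I6/16 + 8·I2·I4 − I2·Ĩ4/2 + 896·I2³ in ℂ[z1,z2,z3,z4] are algebraically independent over ℂ. -/

import Mathlib

/-! Differentiating a relation `p(u) = 0` by the chain rule shows that `(∂ⱼp(u))ⱼ` lies in the
left kernel of the Jacobian matrix of `u`; if its determinant is nonzero, every `∂ⱼp` is again a
relation, of smaller degree, so by induction all `∂ⱼp` vanish and (in characteristic zero) `p`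
is a constant, hence `0`. Here the Jacobian determinant is `(3/8) ∏_{i<j} (zᵢ² - zⱼ²)`, which is
`1620` at `z = (0, 1, 2, 3)`. -/

open MvPolynomial Complex

/-- `I2 = z1²+z2²+z3²+z4²` -/
noncomputable def I2 : MvPolynomial (Fin 4) ℂ := ∑ i, X i ^ 2

/-- `I4 = Σ_{i<j} zi²zj²` -/
noncomputable def I4 : MvPolynomial (Fin 4) ℂ :=
  ∑ p ∈ Finset.univ.filter (fun p : Fin 4 × Fin 4 => p.1 < p.2), X p.1 ^ 2 * X p.2 ^ 2

/-- `I6 = Σ_{i<j<k} zi²zj²zk²` -/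
noncomputable def I6 : MvPolynomial (Fin 4) ℂ :=
  ∑ p ∈ Finset.univ.filter (fun p : Fin 4 × Fin 4 × Fin 4 => p.1 < p.2.1 ∧ p.2.1 < p.2.2),
    X p.1 ^ 2 * X p.2.1 ^ 2 * X p.2.2 ^ 2

/-- `Ĩ4 = z1z2z3z4` -/
noncomputable def I4t : MvPolynomial (Fin 4) ℂ := ∏ i, X i

/-- `c1⁰ = −12·I2` -/
noncomputable def c1q0 : MvPolynomial (Fin 4) ℂ := -(C (12 : ℂ)) * I2

/-- `c2⁰ = I4 + Ĩ4/4 + 368·I2²` -/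
noncomputable def c2q0 : MvPolynomial (Fin 4) ℂ := I4 + C (1 / 4 : ℂ) * I4t + C (368 : ℂ) * I2 ^ 2

/-- `d2⁰ = −I4/6 + Ĩ4/48 − (88/3)·I2²` -/
noncomputable def d2q0 : MvPolynomial (Fin 4) ℂ :=
  -(C (1 / 6 : ℂ)) * I4 + C (1 / 48 : ℂ) * I4t - C (88 / 3 : ℂ) * I2 ^ 2

/-- `d3⁰ = I6/16 + 8·I2·I4 − I2·Ĩ4/2 + 896·I2³` -/
noncomputable def d3q0 : MvPolynomial (Fin 4) ℂ :=
  C (1 / 16 : ℂ) * I6 + C (8 : ℂ) * I2 * I4 - C (1 / 2 : ℂ) * I2 * I4t + C (896 : ℂ) * I2 ^ 3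

namespace MvPolynomial

variable {R σ τ ι : Type*}

section CommSemiring

variable [CommSemiring R]

noncomputable def jacobian (u : ι → MvPolynomial σ R) : Matrix ι σ (MvPolynomial σ R) :=
  Matrix.of fun j i => pderiv i (u j)

theorem pderiv_aeval [Fintype σ] (u : σ → MvPolynomial τ R) (i : τ) (p : MvPolynomial σ R) :
    pderiv i (aeval u p) = ∑ j, aeval u (pderiv j p) * pderiv i (u j) := by
  classical
  induction p using MvPolynomial.induction_on with
  | C a => simp
  | add p q hp hq => simp only [map_add, hp, hq, add_mul, Finset.sum_add_distrib]
  | mul_X p k hp =>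
    simp only [map_mul, aeval_X, pderiv_mul, hp, map_add, pderiv_X, add_mul,
      Finset.sum_add_distrib, Finset.sum_mul, Pi.single_apply, apply_ite (aeval u), map_zero,
      mul_ite, mul_one, mul_zero, ite_mul, zero_mul, Finset.sum_ite_eq, Finset.mem_univ, if_true,
      mul_right_comm _ (u k)]

theorem totalDegree_pderiv_lt {p : MvPolynomial σ R} {i : σ} (h : pderiv i p ≠ 0) :
    (pderiv i p).totalDegree < p.totalDegree := by
  obtain ⟨m, hm, hdeg⟩ := Finset.exists_mem_eq_sup _ (support_nonempty.2 h)
    fun s => s.sum fun _ e => e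
  have hcoeff : coeff (m + Finsupp.single i 1) p ≠ 0 := by
    intro h0
    rw [mem_support_iff, coeff_pderiv, h0, zero_mul] at hm
    exact hm rfl
  calc (pderiv i p).totalDegree = m.sum fun _ e => e := hdeg
    _ < (m + Finsupp.single i 1).sum fun _ e => e := by
      rw [Finsupp.sum_add_index' (fun _ => rfl) fun _ _ _ => rfl]; simp
    _ ≤ p.totalDegree := le_totalDegree (mem_support_iff.2 hcoeff)

end CommSemiring

variable [CommRing R] [IsDomain R] [CharZero R]

theorem eq_C_of_forall_pderiv_eq_zero {p : MvPolynomial σ R} (h : ∀ i, pderiv i p = 0) :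
    p = C (coeff 0 p) := by
  classical
  ext m
  rw [coeff_C]
  split_ifs with hm
  · rw [hm]
  obtain ⟨i, hi⟩ : ∃ i, m i ≠ 0 := by
    by_contra! h'
    exact hm (Finsupp.ext h').symm
  have := coeff_pderiv (i := i) p (m - Finsupp.single i 1)
  rw [h i, Finsupp.sub_add_single_one_cancel hi, coeff_zero, eq_comm, mul_eq_zero] at this
  exact this.resolve_right (Nat.cast_add_one_ne_zero _)

theorem algebraicIndependent_of_det_jacobian_ne_zero [Fintype σ] [DecidableEq σ]
    {u : σ → MvPolynomial σ R} (h : (jacobian u).det ≠ 0) : AlgebraicIndependent R u := by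
  rw [algebraicIndependent_iff]
  intro p hp
  induction hn : p.totalDegree using Nat.strong_induction_on generalizing p with
  | _ n ih =>
  have hkernel : Matrix.vecMul (fun j => aeval u (pderiv j p)) (jacobian u) = 0 := by
    funext i
    simp only [Matrix.vecMul, dotProduct, jacobian, Matrix.of_apply, ← pderiv_aeval, hp, map_zero,
      Pi.zero_apply]
  have hpderiv : ∀ j, pderiv j p = 0 := fun j => by
    by_contra hj
    exact hj <| ih _ (hn ▸ totalDegree_pderiv_lt hj) _
      (congrFun (Matrix.eq_zero_of_vecMul_eq_zero h hkernel) j) rfl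
  rw [eq_C_of_forall_pderiv_eq_zero hpderiv] at hp ⊢
  rw [aeval_C, algebraMap_eq, C_eq_zero] at hp
  rw [hp, map_zero]

end MvPolynomial

theorem I2_eq : I2 = X 0 ^ 2 + X 1 ^ 2 + X 2 ^ 2 + X 3 ^ 2 := by
  simp [I2, Fin.sum_univ_four]

theorem I4_eq : I4 = X 0 ^ 2 * X 1 ^ 2 + X 0 ^ 2 * X 2 ^ 2 + X 0 ^ 2 * X 3 ^ 2
    + X 1 ^ 2 * X 2 ^ 2 + X 1 ^ 2 * X 3 ^ 2 + X 2 ^ 2 * X 3 ^ 2 := by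
  simp [I4, Finset.sum_filter, Fintype.sum_prod_type, Fin.sum_univ_four]
  ring

theorem I6_eq : I6 = X 0 ^ 2 * X 1 ^ 2 * X 2 ^ 2 + X 0 ^ 2 * X 1 ^ 2 * X 3 ^ 2
    + X 0 ^ 2 * X 2 ^ 2 * X 3 ^ 2 + X 1 ^ 2 * X 2 ^ 2 * X 3 ^ 2 := by
  simp [I6, Finset.sum_filter, Fintype.sum_prod_type, Fin.sum_univ_four]

theorem I4t_eq : I4t = X 0 * X 1 * X 2 * X 3 := by
  simp [I4t, Fin.prod_univ_four]

theorem jacobian_map_eval :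
    (jacobian ![c1q0, c2q0, d2q0, d3q0]).map (eval ![0, 1, 2, 3]) =
      !![0, -24, -48, -72;
         3/2, 20634, 41256, 61854;
         1/8, -1647, -3292, -4933;
         -42, 2114793/2, 8453769/4, 6333603/2] := by
  ext j i
  fin_cases j <;> fin_cases i <;>
    simp [jacobian, c1q0, c2q0, d2q0, d3q0, I2_eq, I4_eq, I6_eq, I4t_eq] <;> norm_num

theorem det_jacobian_map_eval :
    ((jacobian ![c1q0, c2q0, d2q0, d3q0]).map (eval ![0, 1, 2, 3])).det = 1620 := by
  rw [jacobian_map_eval]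
  simp [Matrix.det_succ_row_zero, Fin.sum_univ_succ, Fin.succAbove]
  norm_num

/-- The four polynomials `c1⁰, c2⁰, d2⁰, d3⁰` are algebraically independent over ℂ. -/
theorem stmt_4 :
    AlgebraicIndependent ℂ (![c1q0, c2q0, d2q0, d3q0] : Fin 4 → MvPolynomial (Fin 4) ℂ) := by
  refine algebraicIndependent_of_det_jacobian_ne_zero fun h => ?_
  have h0123 := det_jacobian_map_eval
  rw [← RingHom.mapMatrix_apply, ← RingHom.map_det, h, map_zero] at h0123
  norm_num at h0123
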